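/- The exponential map at the origin exp_0^c is injective on ℝ^d \ {0}: if exp_0^c(u) = exp_0^c(v) for nonzero u, v, then u = v. -/

import Mathlib

noncomputable def expMap0 (c : ℝ) {d : ℕ} (v : EuclideanSpace ℝ (Fin d)) :
    EuclideanSpace ℝ (Fin d) :=
  Real.tanh (Real.sqrt c * ‖v‖ / 2) • ((Real.sqrt c / 2 * ‖v‖)⁻¹ • v)

lemma tanh_strictMono : StrictMono Real.tanh := by
  intro x y hxy
  rw [Real.tanh_eq_sinh_div_cosh, Real.tanh_eq_sinh_div_cosh,
    div_lt_div_iff₀ (Real.cosh_pos x) (Real.cosh_pos y)]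
  have h1 := Real.sinh_sub x y
  have h2 : Real.sinh (x - y) < 0 := Real.sinh_neg_iff.mpr (by linarith)
  nlinarith

theorem expMap0_injective (c : ℝ) (hc : 0 < c) {d : ℕ}
    (u v : EuclideanSpace ℝ (Fin d)) (hu : u ≠ 0) (hv : v ≠ 0)
    (h : expMap0 c u = expMap0 c v) : u = v := by
  have hsc : 0 < Real.sqrt c := Real.sqrt_pos.mpr hc
  have hnu : 0 < ‖u‖ := norm_pos_iff.mpr hu
  have hnv : 0 < ‖v‖ := norm_pos_iff.mpr hv
  have htpos : ∀ x : ℝ, 0 < x → 0 < Real.tanh x := fun x hx => by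
    simpa using tanh_strictMono hx
  have key : ∀ w : EuclideanSpace ℝ (Fin d), 0 < ‖w‖ →
      ‖expMap0 c w‖ = Real.tanh (Real.sqrt c * ‖w‖ / 2) * (Real.sqrt c / 2)⁻¹ := by
    intro w hw
    have harg : 0 < Real.sqrt c * ‖w‖ / 2 := by positivity
    rw [expMap0, norm_smul, norm_smul, Real.norm_eq_abs, Real.norm_eq_abs,
      abs_of_pos (htpos _ harg), abs_of_pos (by positivity : (0:ℝ) < (Real.sqrt c / 2 * ‖w‖)⁻¹)]
    field_simp
  have hnorm : ‖u‖ = ‖v‖ := by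
    have := congrArg norm h
    rw [key u hnu, key v hnv] at this
    have hne : (Real.sqrt c / 2)⁻¹ ≠ 0 := by positivity
    have h2 : Real.tanh (Real.sqrt c * ‖u‖ / 2) = Real.tanh (Real.sqrt c * ‖v‖ / 2) :=
      mul_right_cancel₀ hne this
    have := tanh_strictMono.injective h2
    nlinarith
  rw [expMap0, expMap0, hnorm] at h
  have hne : Real.tanh (Real.sqrt c * ‖v‖ / 2) • (Real.sqrt c / 2 * ‖v‖)⁻¹ ≠ 0 := by
    have := htpos _ (by positivity : (0:ℝ) < Real.sqrt c * ‖v‖ / 2)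
    positivity
  rw [smul_smul, smul_smul] at h
  exact smul_right_injective _ hne h
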